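/- arXiv:2512.01411 — 7 statements merged into one kernel-verified Lean document; each statement's English description precedes it below -/
import Mathlib

section
/- Let n ≥ 2 and let U = (q_{ij}), V = (q'_{ij}) ∈ Sp(n) both lie in 𝒟, i.e., all entries of their last rows are nonzero. Then p(U) = p(V) (that is, q_{ij} q_{nj}^{−1} = q'_{ij} (q'_{nj})^{−1} for all 1 ≤ i ≤ n−1 and 1 ≤ j ≤ n) if and only if there exist unit quaternions g_1, …, g_n ∈ ℍ with |g_j| = 1 such that V = U · diag(g_1, …, g_n), i.e., q'_{ij} = q_{ij} g_j for all i, j. -/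
open Quaternion Matrix

/-- Let `U, V ∈ Sp(n)` (i.e. `Uᴴ U = 1`) have all entries of their last row
nonzero. Then `p(U) = p(V)`, i.e. `U i j (U (n-1) j)⁻¹ = V i j (V (n-1) j)⁻¹`
for all rows `i` above the last and all columns `j`, if and only if
`V = U · diag(g₁, …, gₙ)` for some unit quaternions `g₁, …, gₙ`. -/
theorem p_eq_iff_diag (n : ℕ) (hn : 2 ≤ n)
    (U V : Matrix (Fin n) (Fin n) ℍ[ℝ])
    (hU : Uᴴ * U = 1) (hV : Vᴴ * V = 1)
    (lst : Fin n) (hlst : lst.val = n - 1)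
    (hUrow : ∀ j, U lst j ≠ 0) (hVrow : ∀ j, V lst j ≠ 0) :
    (∀ i : Fin n, i.val < n - 1 → ∀ j : Fin n,
        U i j * (U lst j)⁻¹ = V i j * (V lst j)⁻¹) ↔
      ∃ g : Fin n → ℍ[ℝ], (∀ j, ‖g j‖ = 1) ∧ ∀ i j, V i j = U i j * g j := by
  have colU : ∀ j, ∑ k, star (U k j) * U k j = 1 := by
    intro j
    have := congrFun (congrFun hU j) j
    simpa [Matrix.mul_apply, Matrix.conjTranspose_apply, Matrix.one_apply] using this
  have colV : ∀ j, ∑ k, star (V k j) * V k j = 1 := by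
    intro j
    have := congrFun (congrFun hV j) j
    simpa [Matrix.mul_apply, Matrix.conjTranspose_apply, Matrix.one_apply] using this
  constructor
  · intro h
    set g : Fin n → ℍ[ℝ] := fun j => (U lst j)⁻¹ * V lst j with hg
    have hVeq : ∀ i j, V i j = U i j * g j := by
      intro i j
      rcases lt_or_ge i.val (n - 1) with hi | hi
      · calc V i j = V i j * (V lst j)⁻¹ * V lst j := by
              rw [mul_assoc, inv_mul_cancel₀ (hVrow j), mul_one]
          _ = U i j * (U lst j)⁻¹ * V lst j := by rw [← h i hi j]
          _ = U i j * g j := by rw [hg, mul_assoc]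
      · have hilst : i = lst := by
          apply Fin.ext
          rw [hlst]
          omega
        subst hilst
        simp [hg, ← mul_assoc, mul_inv_cancel₀ (hUrow j)]
    refine ⟨g, ?_, hVeq⟩
    intro j
    have key : star (g j) * g j = 1 := by
      have : ∑ k, star (V k j) * V k j
          = star (g j) * (∑ k, star (U k j) * U k j) * g j := by
        rw [Finset.mul_sum, Finset.sum_mul]
        refine Finset.sum_congr rfl fun k _ => ?_
        rw [hVeq k j, StarMul.star_mul, mul_assoc, mul_assoc, mul_assoc]
      rw [colU j, colV j, mul_one] at this
      exact this.symm
    rw [Quaternion.star_mul_self] at key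
    have h1 : normSq (g j) = 1 := Quaternion.coe_injective (by simpa using key)
    rw [Quaternion.normSq_eq_norm_mul_self] at h1
    nlinarith [norm_nonneg (g j)]
  · rintro ⟨g, hg, hgv⟩ i _ j
    have hgj : g j ≠ 0 := by
      intro h0
      have := hg j
      rw [h0, norm_zero] at this
      exact zero_ne_one this
    rw [hgv, hgv, _root_.mul_inv_rev, mul_assoc, ← mul_assoc (g j),
      mul_inv_cancel₀ hgj, one_mul]
end

section
/- Let n ≥ 2. A tuple w = (w_1, …, w_n) ∈ (ℍ^{n−1})ⁿ lies in the image p(𝒟) (that is, there exists U = (q_{ij}) ∈ Sp(n) with q_{nj} ≠ 0 for all j and w_{ij} = q_{ij} q_{nj}^{−1} for all 1 ≤ i ≤ n−1, 1 ≤ j ≤ n) if and only if Σ_{k=1}^{n−1} \overline{w_{ki}} w_{kj} = −1 for all 1 ≤ i < j ≤ n. -/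
open Quaternion Matrix

/-!
Let `V` be the matrix with columns `(w_j, 1) ∈ ℍⁿ`, whose Gram matrix `Vᴴ V` has entries
`1 + Σₖ w̄ₖᵢ wₖⱼ`. A matrix `U ∈ 𝒟` with `p U = w` is exactly `V` with its columns scaled on the
right by the nonzero last-row entries `qₙⱼ`, so `Uᴴ U = diag(q̄ₙⱼ) Vᴴ V diag(qₙⱼ)`, and `U` is
symplectic only if the columns of `V` are pairwise orthogonal. Conversely, orthogonal columns
are normalised by the real scalars `‖(w_j, 1)‖⁻¹`, which commute with all quaternions.
-/

namespace Matrix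

variable {ι κ R : Type*} [Fintype ι] [Fintype κ] [DecidableEq κ]

theorem conjTranspose_mul_diagonal_mul_self_mul_diagonal [Semiring R] [StarRing R]
    (A : Matrix ι κ R) (d : κ → R) :
    (A * diagonal d)ᴴ * (A * diagonal d) = diagonal (star d) * (Aᴴ * A) * diagonal d := by
  simp only [conjTranspose_mul, diagonal_conjTranspose, Matrix.mul_assoc]

theorem exists_real_scaling_conjTranspose_mul_self_eq_one (V : Matrix ι κ ℍ[ℝ])
    (horth : ∀ i j, i ≠ j → (Vᴴ * V) i j = 0) (hV : ∀ j, ∃ a, V a j ≠ 0) :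
    ∃ s : κ → ℝ, (∀ j, s j ≠ 0) ∧
      (V * diagonal fun j => (s j : ℍ[ℝ]))ᴴ * (V * diagonal fun j => (s j : ℍ[ℝ])) = 1 := by
  set r : κ → ℝ := fun j => ∑ a, normSq (V a j)
  have hr : ∀ j, 0 < r j := fun j => by
    obtain ⟨a, ha⟩ := hV j
    exact lt_of_lt_of_le (normSq_nonneg.lt_of_ne' (normSq_ne_zero.mpr ha))
      (Finset.single_le_sum (f := fun b => normSq (V b j)) (fun b _ => normSq_nonneg)
        (Finset.mem_univ a))
  have hgram : Vᴴ * V = diagonal fun j => (r j : ℍ[ℝ]) := by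
    refine Matrix.ext fun i j => ?_
    rcases eq_or_ne i j with rfl | hij
    · simp only [mul_apply, conjTranspose_apply, star_mul_self, diagonal_apply_eq, r,
        ← algebraMap_def, map_sum]
    · rw [horth i j hij, diagonal_apply_ne _ hij]
  refine ⟨fun j => (√(r j))⁻¹, fun j => inv_ne_zero (Real.sqrt_pos.mpr (hr j)).ne', ?_⟩
  rw [conjTranspose_mul_diagonal_mul_self_mul_diagonal, hgram, diagonal_mul_diagonal,
    diagonal_mul_diagonal, ← diagonal_one]
  congr 1
  ext1 j
  simp only [Pi.star_apply, star_coe, ← coe_mul, ← coe_one, coe_inj]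
  have := Real.sq_sqrt (hr j).le
  field_simp
  rw [this, div_self (hr j).ne']

end Matrix

section Homogenize

variable {m : ℕ} {κ R : Type*}

def homogenize [One R] (w : Matrix (Fin m) κ R) : Matrix (Fin (m + 1)) κ R :=
  Matrix.of fun a j => Fin.lastCases 1 (fun k => w k j) a

@[simp]
theorem homogenize_castSucc [One R] (w : Matrix (Fin m) κ R) (k : Fin m) (j : κ) :
    homogenize w k.castSucc j = w k j := by
  rw [homogenize, of_apply, Fin.lastCases_castSucc]

@[simp]
theorem homogenize_last [One R] (w : Matrix (Fin m) κ R) (j : κ) :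
    homogenize w (Fin.last m) j = 1 := by
  rw [homogenize, of_apply, Fin.lastCases_last]

theorem conjTranspose_homogenize_mul_homogenize_apply [Semiring R] [StarRing R] [Fintype κ]
    (w : Matrix (Fin m) κ R) (i j : κ) :
    ((homogenize w)ᴴ * homogenize w) i j = ∑ k, star (w k i) * w k j + 1 := by
  simp [mul_apply, Fin.sum_univ_castSucc]

theorem eq_homogenize_mul_diagonal [DivisionRing R] [Fintype κ] [DecidableEq κ]
    {U : Matrix (Fin (m + 1)) κ R} {w : Matrix (Fin m) κ R}
    (hU : ∀ j, U (Fin.last m) j ≠ 0) (hw : ∀ k j, w k j = U k.castSucc j * (U (Fin.last m) j)⁻¹) :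
    U = homogenize w * diagonal (U (Fin.last m)) := by
  ext a j
  rw [mul_diagonal]
  induction a using Fin.lastCases with
  | last => rw [homogenize_last, one_mul]
  | cast k => rw [homogenize_castSucc, hw, inv_mul_cancel_right₀ (hU j)]

theorem exists_orthonormal_dehomogenize_eq_iff [Fintype κ] [DecidableEq κ]
    (w : Matrix (Fin m) κ ℍ[ℝ]) :
    (∃ U : Matrix (Fin (m + 1)) κ ℍ[ℝ], Uᴴ * U = 1 ∧ (∀ j, U (Fin.last m) j ≠ 0) ∧
        ∀ k j, w k j = U k.castSucc j * (U (Fin.last m) j)⁻¹) ↔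
      ∀ i j, i ≠ j → ∑ k, star (w k i) * w k j = -1 := by
  simp_rw [← add_eq_zero_iff_eq_neg, ← conjTranspose_homogenize_mul_homogenize_apply]
  constructor
  · rintro ⟨U, hU, hlast, hw⟩ i j hij
    have h := congrFun₂ hU i j
    rw [eq_homogenize_mul_diagonal hlast hw, conjTranspose_mul_diagonal_mul_self_mul_diagonal,
      mul_diagonal, diagonal_mul, one_apply_ne hij] at h
    simpa [hlast] using h
  · intro horth
    obtain ⟨s, hs, hU⟩ := exists_real_scaling_conjTranspose_mul_self_eq_one _ horth
      fun j => ⟨Fin.last m, by simp⟩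
    have hs' : ∀ j, (s j : ℍ[ℝ]) ≠ 0 := fun j => by rw [Ne, ← coe_zero, coe_inj]; exact hs j
    refine ⟨_, hU, fun j => by simpa [mul_diagonal] using hs' j, fun k j => ?_⟩
    simp [mul_diagonal, hs' j]

end Homogenize

/-- A tuple `w = (w₁, …, wₙ) ∈ (ℍ^{n-1})ⁿ` lies in the image `p(𝒟)`, i.e. there
is `U ∈ Sp(n)` with all last-row entries nonzero and `w i j = U i j (U (n-1) j)⁻¹`,
if and only if `Σ_{k} conj (w k i) * w k j = -1` for all `i < j`. -/
theorem mem_image_p_iff (n : ℕ) (hn : 2 ≤ n) (w : Fin (n - 1) → Fin n → ℍ[ℝ]) :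
    (∃ U : Matrix (Fin n) (Fin n) ℍ[ℝ], Uᴴ * U = 1 ∧
        (∀ j : Fin n, U ⟨n - 1, by omega⟩ j ≠ 0) ∧
        ∀ (i : Fin (n - 1)) (j : Fin n),
          w i j = U ⟨i.val, lt_of_lt_of_le i.isLt (Nat.sub_le n 1)⟩ j *
            (U ⟨n - 1, by omega⟩ j)⁻¹) ↔
      ∀ i j : Fin n, i < j → ∑ k : Fin (n - 1), star (w k i) * w k j = -1 := by
  obtain ⟨m, rfl⟩ : ∃ m, n = m + 1 := ⟨n - 1, by omega⟩
  refine (exists_orthonormal_dehomogenize_eq_iff w).trans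
    ⟨fun h i j hij => h i j hij.ne, fun h i j hij => ?_⟩
  rcases hij.lt_or_gt with hij | hji
  · exact h i j hij
  · simpa [star_sum] using congrArg star (h j i hji)
end

section
/- Let n ≥ 1 and let F : ℝⁿ → ℝ be twice continuously differentiable. Define λ : ℝ^{4n} → ℝⁿ by λ_j(x) := x_{4j−3}² + x_{4j−2}² + x_{4j−1}² + x_{4j}², and for a C¹ function g : ℝ^{4n} → ℝ define (V_i g)(x) := ∂g/∂x_i(x) − x_i Σ_{ℓ=1}^{4n} x_ℓ ∂g/∂x_ℓ(x), for 1 ≤ i ≤ 4n. Then for every x ∈ ℝ^{4n} with Σ_{i=1}^{4n} x_i² = 1, one has Σ_{i=1}^{4n} (V_i(V_i(F ∘ λ)))(x) = 4 Σ_{j=1}^n λ_j(x)(1 − λ_j(x)) ∂²F/∂λ_j²(λ(x)) − 4 Σ_{1≤j≠ℓ≤n} λ_j(x)λ_ℓ(x) ∂²F/∂λ_j∂λ_ℓ(λ(x)) + 4 Σ_{j=1}^n (2 − 2n λ_j(x)) ∂F/∂λ_j(λ(x)). -/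
/-!
With `D_j := ∂_j - Σ_k y_k ∂_k` on `ℝⁿ` (`simplexV`), the chain rule through `λ` gives
`V_i (Ψ ∘ λ) = 2 x_i · (D_{b(i)} Ψ) ∘ λ`, where `b(i)` is the block of four coordinates containing
`i`. Applying `V_i` once more, using `V_i (x_i g) = (1 - x_i²) g + x_i V_i g`, and summing over
each block (where `Σ x_i² = λ_j`) turns the spherical Laplacian into an expression in the `D_j`
at `y = λ(x)`. On the simplex `Σ_j y_j = 1` one has `Σ_j y_j D_j Ψ = 0`, and what remains is the
Jacobi operator.
-/

/-- Partial derivative `∂g/∂x_i` of a function `g : ℝᵐ → ℝ`. -/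
noncomputable def pd {m : ℕ} (i : Fin m) (g : (Fin m → ℝ) → ℝ)
    (x : Fin m → ℝ) : ℝ :=
  fderiv ℝ g x (Pi.single i 1)

/-- The vector field `V_i = ∂/∂x_i - x_i Σ_ℓ x_ℓ ∂/∂x_ℓ`, the orthogonal
projection of `∂/∂x_i` onto the tangent space of the unit sphere. -/
noncomputable def sphereV {m : ℕ} (i : Fin m) (g : (Fin m → ℝ) → ℝ)
    (x : Fin m → ℝ) : ℝ :=
  pd i g x - x i * ∑ ℓ, x ℓ * pd ℓ g x

/-- The squared-radial coordinates
`λ_j(x) = x_{4j-3}² + x_{4j-2}² + x_{4j-1}² + x_{4j}²` on `ℝ^{4n}`. -/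
noncomputable def lamCoord (n : ℕ) (x : Fin (4 * n) → ℝ) : Fin n → ℝ :=
  fun j => ∑ a : Fin 4,
    (x ⟨4 * j.val + a.val, by have h1 := j.isLt; have h2 := a.isLt; omega⟩) ^ 2

section PartialDerivatives

variable {m : ℕ} {x : Fin m → ℝ}

lemma pd_sub {f g : (Fin m → ℝ) → ℝ} (hf : DifferentiableAt ℝ f x)
    (hg : DifferentiableAt ℝ g x) (i : Fin m) :
    pd i (fun y => f y - g y) x = pd i f x - pd i g x := by
  simp [pd, fderiv_fun_sub hf hg]

lemma pd_const_mul {f : (Fin m → ℝ) → ℝ} (hf : DifferentiableAt ℝ f x) (c : ℝ) (i : Fin m) :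
    pd i (fun y => c * f y) x = c * pd i f x := by
  simp [pd, fderiv_const_mul hf]

lemma pd_sum {ι : Type*} {s : Finset ι} {f : ι → (Fin m → ℝ) → ℝ}
    (hf : ∀ k ∈ s, DifferentiableAt ℝ (f k) x) (i : Fin m) :
    pd i (fun y => ∑ k ∈ s, f k y) x = ∑ k ∈ s, pd i (f k) x := by
  simp [pd, fderiv_fun_sum hf]

lemma pd_coord (i k : Fin m) : pd i (fun y => y k) x = if i = k then 1 else 0 := by
  simp [pd, (hasFDerivAt_apply k x).fderiv, Pi.single_apply, eq_comm]

lemma pd_coord_mul {f : (Fin m → ℝ) → ℝ} (hf : DifferentiableAt ℝ f x) (i k : Fin m) :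
    pd i (fun y => y k * f y) x = x k * pd i f x + if i = k then f x else 0 := by
  have hk : DifferentiableAt ℝ (fun y : Fin m → ℝ => y k) x := by fun_prop
  have hpd := pd_coord (x := x) i k
  simp only [pd] at hpd ⊢
  simp [fderiv_fun_mul hk hf, hpd]

lemma pd_coord_sq (i k : Fin m) :
    pd i (fun y => y k ^ 2) x = if i = k then 2 * x k else 0 := by
  have hk : DifferentiableAt ℝ (fun y : Fin m → ℝ => y k) x := by fun_prop
  have hpd := pd_coord (x := x) i k
  simp only [pd] at hpd ⊢
  simp [fderiv_fun_pow _ hk, hpd]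

lemma pd_comp {n : ℕ} {g : (Fin m → ℝ) → Fin n → ℝ} {Ψ : (Fin n → ℝ) → ℝ}
    (hΨ : DifferentiableAt ℝ Ψ (g x)) (hg : DifferentiableAt ℝ g x) (i : Fin m) :
    pd i (Ψ ∘ g) x = ∑ j, pd i (fun y => g y j) x * pd j Ψ (g x) := by
  unfold pd
  rw [fderiv_comp x hΨ hg, ContinuousLinearMap.comp_apply]
  conv_lhs => rw [pi_eq_sum_univ' (fderiv ℝ g x (Pi.single i 1))]
  simp [map_sum, fderiv_apply hg]

end PartialDerivatives

section Euler

variable {m : ℕ}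

noncomputable def euler (f : (Fin m → ℝ) → ℝ) (x : Fin m → ℝ) : ℝ :=
  ∑ ℓ, x ℓ * pd ℓ f x

lemma sphereV_eq (i : Fin m) (f : (Fin m → ℝ) → ℝ) (x : Fin m → ℝ) :
    sphereV i f x = pd i f x - x i * euler f x := rfl

variable {f : (Fin m → ℝ) → ℝ} {x : Fin m → ℝ}

lemma euler_coord_mul (hf : DifferentiableAt ℝ f x) (k : Fin m) :
    euler (fun y => y k * f y) x = x k * f x + x k * euler f x := by
  simp only [euler, pd_coord_mul hf, mul_add, Finset.sum_add_distrib, mul_ite, mul_zero,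
    Finset.sum_ite_eq', Finset.mem_univ, if_true, Finset.mul_sum, mul_left_comm (x k)]
  ring

lemma sphereV_coord_mul (hf : DifferentiableAt ℝ f x) (i : Fin m) :
    sphereV i (fun y => y i * f y) x = (1 - x i ^ 2) * f x + x i * sphereV i f x := by
  rw [sphereV_eq, sphereV_eq, euler_coord_mul hf, pd_coord_mul hf, if_pos rfl]
  ring

lemma sphereV_const_mul (hf : DifferentiableAt ℝ f x) (c : ℝ) (i : Fin m) :
    sphereV i (fun y => c * f y) x = c * sphereV i f x := by
  simp only [sphereV, pd_const_mul hf, Finset.mul_sum, mul_sub, mul_left_comm c]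

end Euler

section Simplex

variable {n : ℕ}

noncomputable def simplexV (j : Fin n) (Ψ : (Fin n → ℝ) → ℝ) (y : Fin n → ℝ) : ℝ :=
  pd j Ψ y - euler Ψ y

variable {Ψ : (Fin n → ℝ) → ℝ} {y : Fin n → ℝ}

lemma differentiableAt_simplexV (hΨ : ∀ k, DifferentiableAt ℝ (pd k Ψ) y) (j : Fin n) :
    DifferentiableAt ℝ (simplexV j Ψ) y := by
  unfold simplexV euler
  fun_prop

lemma pd_simplexV (hΨ : ∀ k, DifferentiableAt ℝ (pd k Ψ) y) (j m : Fin n) :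
    pd m (simplexV j Ψ) y
      = pd m (pd j Ψ) y - pd m Ψ y - ∑ k, y k * pd m (pd k Ψ) y := by
  unfold simplexV euler
  rw [pd_sub (hΨ j) (by fun_prop), pd_sum (fun k _ => by fun_prop)]
  simp only [pd_coord_mul (hΨ _), Finset.sum_add_distrib, Finset.sum_ite_eq, Finset.mem_univ,
    if_true]
  ring

lemma sum_mul_simplexV (hy : ∑ k, y k = 1) : ∑ j, y j * simplexV j Ψ y = 0 := by
  simp [simplexV, mul_sub, Finset.sum_sub_distrib, ← Finset.sum_mul, hy, euler]

lemma sum_mul_simplexV_simplexV (hy : ∑ k, y k = 1) (hΨ : ∀ k, DifferentiableAt ℝ (pd k Ψ) y) :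
    ∑ j, y j * simplexV j (simplexV j Ψ) y
      = ∑ j, y j * pd j (pd j Ψ) y - ∑ j, ∑ k, y j * y k * pd j (pd k Ψ) y := by
  have hc : ∀ c : ℝ, ∑ j, y j * c = c := fun c => by rw [← Finset.sum_mul, hy, one_mul]
  have hswap : ∑ j, y j * ∑ k, y k * pd k (pd j Ψ) y
      = ∑ j, ∑ k, y j * y k * pd j (pd k Ψ) y := by
    simp only [Finset.mul_sum]
    rw [Finset.sum_comm]
    exact Finset.sum_congr rfl fun _ _ => Finset.sum_congr rfl fun _ _ => by ring
  simp only [simplexV, euler, pd_simplexV hΨ, mul_sub, Finset.sum_sub_distrib, hc, hswap]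
  ring

lemma eq_jacobi_operator (hy : ∑ k, y k = 1) (hΨ : ∀ k, DifferentiableAt ℝ (pd k Ψ) y) :
    4 * ∑ j, 2 * simplexV j Ψ y
        + ∑ j, y j * (4 * simplexV j (simplexV j Ψ) y - 2 * simplexV j Ψ y) =
      4 * (∑ j, y j * (1 - y j) * pd j (pd j Ψ) y)
      - 4 * (∑ j, ∑ ℓ, if j = ℓ then 0 else y j * y ℓ * pd j (pd ℓ Ψ) y)
      + 4 * (∑ j, (2 - 2 * n * y j) * pd j Ψ y) := by
  have hsplit : ∑ j, y j * (4 * simplexV j (simplexV j Ψ) y - 2 * simplexV j Ψ y)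
      = 4 * ∑ j, y j * simplexV j (simplexV j Ψ) y - 2 * ∑ j, y j * simplexV j Ψ y := by
    simp only [mul_sub, Finset.sum_sub_distrib, Finset.mul_sum, mul_left_comm]
  have hoff : ∑ j, ∑ ℓ, (if j = ℓ then 0 else y j * y ℓ * pd j (pd ℓ Ψ) y)
      = ∑ j, ∑ ℓ, y j * y ℓ * pd j (pd ℓ Ψ) y - ∑ j, y j * y j * pd j (pd j Ψ) y := by
    rw [← Finset.sum_sub_distrib]
    refine Finset.sum_congr rfl fun j _ => ?_
    rw [eq_sub_iff_add_eq, ← Finset.add_sum_erase _ _ (Finset.mem_univ j)]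
    simp [Finset.sum_ite, Finset.filter_ne]
  rw [hsplit, sum_mul_simplexV hy, sum_mul_simplexV_simplexV hy hΨ, hoff]
  simp only [simplexV, euler, mul_sub, sub_mul, mul_one, Finset.sum_sub_distrib, mul_assoc,
    ← Finset.mul_sum, Finset.sum_const, Finset.card_univ, Fintype.card_fin, nsmul_eq_mul]
  ring

end Simplex

section LamCoord

variable {n : ℕ}

def blockEquiv (n : ℕ) : Fin n × Fin 4 ≃ Fin (4 * n) :=
  finProdFinEquiv.trans (finCongr (Nat.mul_comm n 4))

def block (i : Fin (4 * n)) : Fin n := ((blockEquiv n).symm i).1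

@[simp]
lemma block_blockEquiv (p : Fin n × Fin 4) : block (blockEquiv n p) = p.1 := by
  simp [block]

lemma lamCoord_apply (x : Fin (4 * n) → ℝ) (j : Fin n) :
    lamCoord n x j = ∑ a, x (blockEquiv n (j, a)) ^ 2 := by
  simp only [lamCoord]
  congr! with a
  simp only [blockEquiv, Equiv.trans_apply, finCongr_apply, Fin.val_cast,
    finProdFinEquiv_apply_val]
  ring

lemma sum_eq_sum_blocks {M : Type*} [AddCommMonoid M] (f : Fin (4 * n) → M) :
    ∑ i, f i = ∑ j, ∑ a, f (blockEquiv n (j, a)) := by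
  rw [← (blockEquiv n).sum_comp, Fintype.sum_prod_type]

lemma sum_comp_block (φ : Fin n → ℝ) : ∑ i : Fin (4 * n), φ (block i) = 4 * ∑ j, φ j := by
  simp [sum_eq_sum_blocks, Finset.mul_sum]

lemma sum_sq_mul_comp_block (x : Fin (4 * n) → ℝ) (φ : Fin n → ℝ) :
    ∑ i, x i ^ 2 * φ (block i) = ∑ j, lamCoord n x j * φ j := by
  simp [sum_eq_sum_blocks, lamCoord_apply, Finset.sum_mul]

lemma sum_lamCoord (x : Fin (4 * n) → ℝ) : ∑ j, lamCoord n x j = ∑ i, x i ^ 2 := by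
  simpa using (sum_sq_mul_comp_block x 1).symm

lemma differentiable_lamCoord : Differentiable ℝ (lamCoord n) := by
  unfold lamCoord
  fun_prop

lemma pd_lamCoord (x : Fin (4 * n) → ℝ) (i : Fin (4 * n)) (j : Fin n) :
    pd i (fun y => lamCoord n y j) x = if block i = j then 2 * x i else 0 := by
  obtain ⟨⟨j₀, a₀⟩, rfl⟩ := (blockEquiv n).surjective i
  simp only [lamCoord_apply]
  rw [pd_sum (fun a _ => by fun_prop)]
  by_cases h : j₀ = j <;> simp [pd_coord_sq, (blockEquiv n).injective.eq_iff, h]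

lemma pd_comp_lamCoord {Ψ : (Fin n → ℝ) → ℝ} {x : Fin (4 * n) → ℝ}
    (hΨ : DifferentiableAt ℝ Ψ (lamCoord n x)) (i : Fin (4 * n)) :
    pd i (Ψ ∘ lamCoord n) x = 2 * x i * pd (block i) Ψ (lamCoord n x) := by
  simp [pd_comp hΨ differentiable_lamCoord.differentiableAt, pd_lamCoord]

lemma euler_comp_lamCoord {Ψ : (Fin n → ℝ) → ℝ} {x : Fin (4 * n) → ℝ}
    (hΨ : DifferentiableAt ℝ Ψ (lamCoord n x)) :
    euler (Ψ ∘ lamCoord n) x = 2 * euler Ψ (lamCoord n x) :=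
  calc euler (Ψ ∘ lamCoord n) x = ∑ i, x i ^ 2 * (2 * pd (block i) Ψ (lamCoord n x)) :=
        Finset.sum_congr rfl fun i _ => by rw [pd_comp_lamCoord hΨ]; ring
    _ = ∑ j, lamCoord n x j * (2 * pd j Ψ (lamCoord n x)) :=
        sum_sq_mul_comp_block x fun j => 2 * pd j Ψ (lamCoord n x)
    _ = 2 * euler Ψ (lamCoord n x) := by simp only [euler, Finset.mul_sum, mul_left_comm]

lemma sphereV_comp_lamCoord {Ψ : (Fin n → ℝ) → ℝ} {x : Fin (4 * n) → ℝ}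
    (hΨ : DifferentiableAt ℝ Ψ (lamCoord n x)) (i : Fin (4 * n)) :
    sphereV i (Ψ ∘ lamCoord n) x = 2 * x i * simplexV (block i) Ψ (lamCoord n x) := by
  rw [sphereV_eq, euler_comp_lamCoord hΨ, pd_comp_lamCoord hΨ, simplexV]
  ring

lemma sphereV_sphereV_comp_lamCoord {Ψ : (Fin n → ℝ) → ℝ} {x : Fin (4 * n) → ℝ}
    (hΨ : Differentiable ℝ Ψ) (hΨ' : ∀ k, DifferentiableAt ℝ (pd k Ψ) (lamCoord n x))
    (i : Fin (4 * n)) :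
    sphereV i (sphereV i (Ψ ∘ lamCoord n)) x =
      2 * simplexV (block i) Ψ (lamCoord n x)
        + x i ^ 2 * (4 * simplexV (block i) (simplexV (block i) Ψ) (lamCoord n x)
          - 2 * simplexV (block i) Ψ (lamCoord n x)) := by
  have hV : DifferentiableAt ℝ (simplexV (block i) Ψ) (lamCoord n x) :=
    differentiableAt_simplexV hΨ' _
  have hVcomp : DifferentiableAt ℝ (simplexV (block i) Ψ ∘ lamCoord n) x :=
    hV.comp x differentiable_lamCoord.differentiableAt
  have hfirst : sphereV i (Ψ ∘ lamCoord n)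
      = fun y => y i * (2 * (simplexV (block i) Ψ ∘ lamCoord n) y) :=
    funext fun y => by rw [sphereV_comp_lamCoord (hΨ _), Function.comp_apply]; ring
  rw [hfirst, sphereV_coord_mul (hVcomp.const_mul 2), sphereV_const_mul hVcomp,
    sphereV_comp_lamCoord hV, Function.comp_apply]
  ring

end LamCoord

theorem sphere_laplacian_radial_general (n : ℕ)
    (F : (Fin n → ℝ) → ℝ) (hF : ContDiff ℝ 2 F)
    (x : Fin (4 * n) → ℝ) (hx : ∑ i, (x i) ^ 2 = 1) :
    ∑ i, sphereV i (sphereV i (F ∘ lamCoord n)) x =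
      4 * (∑ j, lamCoord n x j * (1 - lamCoord n x j) * pd j (pd j F) (lamCoord n x))
      - 4 * (∑ j, ∑ ℓ, if j = ℓ then 0 else
          lamCoord n x j * lamCoord n x ℓ * pd j (pd ℓ F) (lamCoord n x))
      + 4 * (∑ j, (2 - 2 * n * lamCoord n x j) * pd j F (lamCoord n x)) := by
  have hF₁ : Differentiable ℝ F := hF.differentiable (by norm_num)
  have hF₂ : ∀ k, Differentiable ℝ (pd k F) := fun k =>
    ((hF.fderiv_right (m := 1) (by norm_num)).clm_apply contDiff_const).differentiable
      one_ne_zero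
  have hsimplex : ∑ j, lamCoord n x j = 1 := by rw [sum_lamCoord, hx]
  rw [← eq_jacobi_operator hsimplex fun k => hF₂ k _, ← sum_comp_block, ← sum_sq_mul_comp_block,
    ← Finset.sum_add_distrib]
  exact Finset.sum_congr rfl fun i _ => sphereV_sphereV_comp_lamCoord hF₁ (fun k => hF₂ k _) i

/-- On the unit sphere of `ℝ^{4n}`, the spherical Laplacian `Σ_i V_i²` applied
to `F ∘ λ` equals the Jacobi operator of index `(3/2, …, 3/2)` applied to `F`,
evaluated at `λ(x)`. -/
theorem sphere_laplacian_radial (n : ℕ) (hn : 1 ≤ n)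
    (F : (Fin n → ℝ) → ℝ) (hF : ContDiff ℝ 2 F)
    (x : Fin (4 * n) → ℝ) (hx : ∑ i, (x i) ^ 2 = 1) :
    ∑ i, sphereV i (sphereV i (F ∘ lamCoord n)) x =
      4 * (∑ j, lamCoord n x j * (1 - lamCoord n x j) * pd j (pd j F) (lamCoord n x))
      - 4 * (∑ j, ∑ ℓ, if j = ℓ then 0 else
          lamCoord n x j * lamCoord n x ℓ * pd j (pd ℓ F) (lamCoord n x))
      + 4 * (∑ j, (2 - 2 * n * lamCoord n x j) * pd j F (lamCoord n x)) :=
  sphere_laplacian_radial_general n F hF x hx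
end

section
/- Let n ≥ 2 and fix 1 ≤ j ≤ n. Let Θ_j : ℝ → ℍ be a differentiable curve with |Θ_j(t)| = 1 for all t, and let w_{ij} : ℝ → ℍ (1 ≤ i ≤ n−1) be differentiable curves; set |w_j(t)|² := Σ_{i=1}^{n−1} |w_{ij}(t)|², and define q_{ij}(t) := w_{ij}(t)Θ_j(t)/√(1+|w_j(t)|²) for 1 ≤ i ≤ n−1 and q_{nj}(t) := Θ_j(t)/√(1+|w_j(t)|²). Then for every t, ½ Σ_{k=1}^{n} ( \overline{q_{kj}(t)} q'_{kj}(t) − \overline{q'_{kj}(t)} q_{kj}(t) ) = Θ_j(t)^{−1} Θ'_j(t) + ½ Θ_j(t)^{−1} ( Σ_{k=1}^{n−1} ( \overline{w_{kj}(t)} w'_{kj}(t) − \overline{w'_{kj}(t)} w_{kj}(t) ) / (1+|w_j(t)|²) ) Θ_j(t). -/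
/-!
Write `A(x, x') = x̄ x' - x̄' x`. Scaling a curve by a real function `f` only multiplies `A` by
`f²`, since the terms with `f'` are `f f' (x̄ x - x̄ x) = 0`. For a product `a Θ` one has
`A(a Θ) = Θ̄ A(a) Θ + |a|² A(Θ)`, because `ā a = |a|²` is a central scalar. Summing over the
coordinates `q_k = f · (w_k Θ)` and `q_n = f · Θ` with `f² = (1 + |w|²)⁻¹`, the coefficients of
`A(Θ)` add up to `f² (|w|² + 1) = 1`, and `|Θ| = 1` makes `Θ̄' Θ = -Θ̄ Θ'`, so that
`A(Θ) = 2 Θ⁻¹ Θ'`.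
-/

open Quaternion

namespace Quaternion

instance {R : Type*} [CommRing R] [Star R] [TrivialStar R] : StarModule R ℍ[R] :=
  ⟨fun r a => by rw [star_smul, star_trivial r]⟩

theorem inv_eq_star_of_norm_eq_one {a : ℍ[ℝ]} (ha : ‖a‖ = 1) : a⁻¹ = star a := by
  rw [inv_def, normSq_eq_norm_mul_self, ha, mul_one, inv_one, one_smul]

variable {R : Type*} [CommRing R]

def skewStarMul (x y : ℍ[R]) : ℍ[R] := star x * y - star y * x

theorem skewStarMul_smul (r dr : R) (x dx : ℍ[R]) :
    skewStarMul (r • x) (r • dx + dr • x) = r ^ 2 • skewStarMul x dx := by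
  simp only [skewStarMul, star_smul, star_add, smul_mul_assoc, mul_smul_comm, mul_add, add_mul]
  module

theorem skewStarMul_mul (a da b db : ℍ[R]) :
    skewStarMul (a * b) (da * b + a * db)
      = star b * skewStarMul a da * b + normSq a • skewStarMul b db := by
  have hstar (x : ℍ[R]) : star a * (a * x) = normSq a • x := by
    rw [← mul_assoc, star_mul_self, coe_mul_eq_smul]
  have hstar' (x y : ℍ[R]) : x * star a * (a * y) = normSq a • (x * y) := by
    rw [mul_assoc, hstar, mul_smul_comm]
  simp only [skewStarMul, star_mul, star_add, mul_add, add_mul, mul_sub, sub_mul, smul_sub,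
    ← mul_assoc, hstar']
  simp only [mul_assoc, hstar, mul_smul_comm]
  abel

end Quaternion

section Curves

variable {f : ℝ → ℝ} {a b Θ : ℝ → ℍ[ℝ]} {a' b' Θ' : ℍ[ℝ]} {t : ℝ}

theorem skewStarMul_deriv_smul (hf : DifferentiableAt ℝ f t) (ha : HasDerivAt a a' t) :
    skewStarMul (f t • a t) (deriv (fun s => f s • a s) t) = f t ^ 2 • skewStarMul (a t) a' := by
  rw [(hf.hasDerivAt.fun_smul ha).deriv, skewStarMul_smul]

theorem skewStarMul_deriv_smul_mul (hf : DifferentiableAt ℝ f t) (ha : HasDerivAt a a' t)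
    (hb : HasDerivAt b b' t) :
    skewStarMul (f t • (a t * b t)) (deriv (fun s => f s • (a s * b s)) t)
      = f t ^ 2 • (star (b t) * skewStarMul (a t) a' * b t + ‖a t‖ ^ 2 • skewStarMul (b t) b') := by
  rw [skewStarMul_deriv_smul hf (ha.fun_mul hb), skewStarMul_mul, normSq_eq_norm_mul_self, ← sq]

theorem star_deriv_mul_eq_neg_of_norm_eq_const {c : ℝ} (hΘ : HasDerivAt Θ Θ' t)
    (hc : ∀ s, ‖Θ s‖ = c) : star Θ' * Θ t = -(star (Θ t) * Θ') := by
  have hconst : (fun s => star (Θ s) * Θ s) = fun _ => ((c ^ 2 : ℝ) : ℍ[ℝ]) := by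
    funext s
    rw [star_mul_self, normSq_eq_norm_mul_self, hc, sq]
  have hderiv := hΘ.star.fun_mul hΘ
  rw [hconst] at hderiv
  exact eq_neg_of_add_eq_zero_left (hderiv.unique (hasDerivAt_const t _))

theorem skewStarMul_eq_of_norm_eq_const {c : ℝ} (hΘ : HasDerivAt Θ Θ' t) (hc : ∀ s, ‖Θ s‖ = c) :
    skewStarMul (Θ t) Θ' = (2 : ℝ) • (star (Θ t) * Θ') := by
  rw [skewStarMul, star_deriv_mul_eq_neg_of_norm_eq_const hΘ hc, sub_neg_eq_add, two_smul]

theorem sum_skewStarMul_deriv_eq {m : ℕ} {w : Fin m → ℝ → ℍ[ℝ]} {q : Fin (m + 1) → ℝ → ℍ[ℝ]}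
    (hΘ : DifferentiableAt ℝ Θ t) (hΘ1 : ∀ s, ‖Θ s‖ = 1) (hw : ∀ i, DifferentiableAt ℝ (w i) t)
    (hq_castSucc : ∀ i : Fin m,
      q i.castSucc = fun s => (√(1 + ∑ j, ‖w j s‖ ^ 2))⁻¹ • (w i s * Θ s))
    (hq_last : q (Fin.last m) = fun s => (√(1 + ∑ j, ‖w j s‖ ^ 2))⁻¹ • Θ s) :
    ∑ k, skewStarMul (q k t) (deriv (q k) t)
      = (2 : ℝ) • ((Θ t)⁻¹ * deriv Θ t) + (1 + ∑ i, ‖w i t‖ ^ 2)⁻¹ •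
        ((Θ t)⁻¹ * (∑ i, skewStarMul (w i t) (deriv (w i) t)) * Θ t) := by
  set r : ℝ → ℝ := fun s => 1 + ∑ i, ‖w i s‖ ^ 2
  have hr_pos (s : ℝ) : 0 < r s := by positivity
  have hf : DifferentiableAt ℝ (fun s => (√(r s))⁻¹) t :=
    have hr : DifferentiableAt ℝ r t :=
      (differentiableAt_const 1).add (DifferentiableAt.fun_sum fun i _ => (hw i).norm_sq ℝ)
    (hr.sqrt (hr_pos t).ne').inv (Real.sqrt_pos.2 (hr_pos t)).ne'
  have hf_sq : (√(r t))⁻¹ ^ 2 = (r t)⁻¹ := by rw [inv_pow, Real.sq_sqrt (hr_pos t).le]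
  have hq_castSucc_skew (i : Fin m) : skewStarMul (q i.castSucc t) (deriv (q i.castSucc) t)
      = (r t)⁻¹ • (star (Θ t) * skewStarMul (w i t) (deriv (w i) t) * Θ t
        + ‖w i t‖ ^ 2 • skewStarMul (Θ t) (deriv Θ t)) := by
    rw [hq_castSucc]
    beta_reduce
    rw [skewStarMul_deriv_smul_mul hf (hw i).hasDerivAt hΘ.hasDerivAt, hf_sq]
  have hq_last_skew : skewStarMul (q (Fin.last m) t) (deriv (q (Fin.last m)) t)
      = (r t)⁻¹ • skewStarMul (Θ t) (deriv Θ t) := by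
    rw [hq_last]
    beta_reduce
    rw [skewStarMul_deriv_smul hf hΘ.hasDerivAt, hf_sq]
  rw [Fin.sum_univ_castSucc, hq_last_skew, Finset.sum_congr rfl fun i _ => hq_castSucc_skew i,
    ← Finset.smul_sum, Finset.sum_add_distrib, ← Finset.sum_mul, ← Finset.mul_sum,
    ← Finset.sum_smul, skewStarMul_eq_of_norm_eq_const hΘ.hasDerivAt hΘ1,
    ← inv_eq_star_of_norm_eq_one (hΘ1 t)]
  have hr_ne : r t ≠ 0 := (hr_pos t).ne'
  match_scalars
  · rfl
  · field_simp
    ring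

end Curves

/-- Connection-form identity in the local trivialization: for differentiable
curves `Θ_j` (unit quaternion valued) and `w_{ij}` with
`q_{ij} = w_{ij}Θ_j/√(1+|w_j|²)` (`i < n-1`) and `q_{nj} = Θ_j/√(1+|w_j|²)`,
one has
`½ Σ_k (conj q_k · q_k' - conj q_k' · q_k)
  = Θ⁻¹Θ' + ½ Θ⁻¹ (Σ_k (conj w_k · w_k' - conj w_k' · w_k)/(1+|w|²)) Θ`. -/
theorem connection_form_trivialization (n : ℕ) (hn : 2 ≤ n)
    (Θ : ℝ → ℍ[ℝ]) (hΘ : Differentiable ℝ Θ) (hΘ1 : ∀ t, ‖Θ t‖ = 1)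
    (w : Fin (n - 1) → ℝ → ℍ[ℝ]) (hw : ∀ i, Differentiable ℝ (w i))
    (q : Fin n → ℝ → ℍ[ℝ])
    (hq : ∀ (k : Fin n) (s : ℝ), q k s =
      if h : k.val < n - 1 then
        (Real.sqrt (1 + ∑ i, ‖w i s‖ ^ 2))⁻¹ • (w ⟨k.val, h⟩ s * Θ s)
      else (Real.sqrt (1 + ∑ i, ‖w i s‖ ^ 2))⁻¹ • Θ s)
    (t : ℝ) :
    (1/2 : ℝ) • ∑ k : Fin n,
        (star (q k t) * deriv (q k) t - star (deriv (q k) t) * q k t)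
      = (Θ t)⁻¹ * deriv Θ t
        + (1/2 : ℝ) • ((Θ t)⁻¹ *
            ((1 + ∑ i, ‖w i t‖ ^ 2)⁻¹ • ∑ k : Fin (n - 1),
              (star (w k t) * deriv (w k) t - star (deriv (w k) t) * w k t))
            * Θ t) := by
  generalize hm : n - 1 = m at w hw hq ⊢
  obtain rfl : n = m + 1 := by omega
  have hq_castSucc (i : Fin m) :
      q i.castSucc = fun s => (√(1 + ∑ j, ‖w j s‖ ^ 2))⁻¹ • (w i s * Θ s) := by
    funext s; rw [hq, dif_pos (show (i.castSucc : ℕ) < m from i.isLt)]; rfl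
  have hq_last : q (Fin.last m) = fun s => (√(1 + ∑ j, ‖w j s‖ ^ 2))⁻¹ • Θ s := by
    funext s; rw [hq, dif_neg (by simp)]
  simp only [← skewStarMul.eq_def]
  rw [sum_skewStarMul_deriv_eq (hΘ t) hΘ1 (fun i => hw i t) hq_castSucc hq_last,
    mul_smul_comm, smul_mul_assoc]
  module
end

section
/- Let n ≥ 2 and let q_1, …, q_n : ℝ → ℍ be differentiable curves with Σ_{i=1}^n |q_i(t)|² = 1 and q_n(t) ≠ 0 for all t. Define w_i(t) := q_i(t) q_n(t)^{−1} for 1 ≤ i ≤ n−1. Then for every t, Σ_{i=1}^{n−1} ( \overline{w_i(t)} w'_i(t) − \overline{w'_i(t)} w_i(t) ) = Σ_{i=1}^{n} \overline{q_n(t)}^{−1} ( \overline{q_i(t)} q'_i(t) − \overline{q'_i(t)} q_i(t) ) q_n(t)^{−1} − |q_n(t)|^{−2} ( q'_n(t) q_n(t)^{−1} − \overline{q_n(t)}^{−1} \overline{q'_n(t)} ). -/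
/-!
Put `a = q_i`, `Q = q_n`. Then `w_i = a Q⁻¹` has derivative `a' Q⁻¹ - a Q⁻¹ Q' Q⁻¹`, and since
`ā a = |a|²` and `Q̄⁻¹ Q⁻¹ = |Q|⁻²` are real, hence central, each summand on the left equals
`Q̄⁻¹ (ā a' - ā' a) Q⁻¹ - |a|² |Q|⁻² (Q' Q⁻¹ - Q̄⁻¹ Q̄')`. Summing over `i < n` with
`Σ_{i<n} |q_i|² = 1 - |Q|²` turns the second terms into `(1 - |Q|⁻²) (Q' Q⁻¹ - Q̄⁻¹ Q̄')`,
and `Q' Q⁻¹ - Q̄⁻¹ Q̄'` is exactly the `i = n` term of the sum on the right.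
-/

open Quaternion

theorem HasDerivAt.inv' {𝕜 R : Type*} [NontriviallyNormedField 𝕜] [NormedDivisionRing R]
    [NormedAlgebra 𝕜 R] {c : 𝕜 → R} {c' : R} {x : 𝕜} (hc : HasDerivAt c c' x) (hx : c x ≠ 0) :
    HasDerivAt (fun y => (c y)⁻¹) (-((c x)⁻¹ * c' * (c x)⁻¹)) x := by
  have := (hasFDerivAt_inv' (𝕜 := 𝕜) hx).comp_hasDerivAt x hc
  rwa [neg_apply, ContinuousLinearMap.mulLeftRight_apply] at this

namespace Quaternion

noncomputable def areaForm (x x' : ℍ[ℝ]) : ℍ[ℝ] := star x * x' - star x' * x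

theorem star_mul_self_eq_smul (a : ℍ[ℝ]) : star a * a = (‖a‖ ^ 2) • (1 : ℍ[ℝ]) := by
  rw [star_mul_self, normSq_eq_norm_mul_self, ← sq, ← coe_one, smul_coe, mul_one]

theorem inv_star_mul_inv (Q : ℍ[ℝ]) : (star Q)⁻¹ * Q⁻¹ = (‖Q‖ ^ 2)⁻¹ • (1 : ℍ[ℝ]) := by
  rw [← mul_inv_rev, self_mul_star, normSq_eq_norm_mul_self, ← sq, ← coe_inv, ← coe_one,
    smul_coe, mul_one]

theorem areaForm_mul_inv (a b Q Q' : ℍ[ℝ]) :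
    areaForm (a * Q⁻¹) (b * Q⁻¹ + a * -(Q⁻¹ * Q' * Q⁻¹))
      = (star Q)⁻¹ * areaForm a b * Q⁻¹
        - (‖a‖ ^ 2 * (‖Q‖ ^ 2)⁻¹) • (Q' * Q⁻¹ - (star Q)⁻¹ * star Q') := by
  have expand : areaForm (a * Q⁻¹) (b * Q⁻¹ + a * -(Q⁻¹ * Q' * Q⁻¹))
      = (star Q)⁻¹ * areaForm a b * Q⁻¹ - (star Q)⁻¹ * (star a * a) * Q⁻¹ * Q' * Q⁻¹
        + (star Q)⁻¹ * star Q' * (star Q)⁻¹ * (star a * a) * Q⁻¹ := by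
    simp only [areaForm, star_add, star_mul, star_neg, star_inv₀]
    noncomm_ring
  rw [expand, star_mul_self_eq_smul]
  simp only [smul_mul_assoc, mul_smul_comm, mul_one, mul_assoc]
  rw [← mul_assoc (star Q)⁻¹ Q⁻¹, inv_star_mul_inv]
  simp only [smul_mul_assoc, mul_smul_comm, one_mul, mul_one, smul_smul, smul_sub]
  abel

theorem inv_star_mul_areaForm_mul_inv {Q : ℍ[ℝ]} (hQ : Q ≠ 0) (Q' : ℍ[ℝ]) :
    (star Q)⁻¹ * areaForm Q Q' * Q⁻¹ = Q' * Q⁻¹ - (star Q)⁻¹ * star Q' := by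
  have hQ' : star Q ≠ 0 := star_ne_zero.mpr hQ
  simp only [areaForm, mul_sub, sub_mul, ← mul_assoc, inv_mul_cancel₀ hQ', one_mul]
  rw [mul_assoc _ Q, mul_inv_cancel₀ hQ, mul_one]

end Quaternion

theorem area_form_affine_identity_general (n : ℕ)
    (q : Fin n → ℝ → ℍ[ℝ]) (hq : ∀ i, Differentiable ℝ (q i))
    (lst : Fin n) (hlst : lst.val = n - 1)
    (hnorm : ∀ t, ∑ i, ‖q i t‖ ^ 2 = 1) (hne : ∀ t, q lst t ≠ 0)
    (w : Fin (n - 1) → ℝ → ℍ[ℝ])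
    (hw : ∀ (i : Fin (n - 1)) (t : ℝ),
      w i t = q ⟨i.val, lt_of_lt_of_le i.isLt (Nat.sub_le n 1)⟩ t * (q lst t)⁻¹)
    (t : ℝ) :
    ∑ i : Fin (n - 1),
        (star (w i t) * deriv (w i) t - star (deriv (w i) t) * w i t)
      = (∑ i : Fin n, (star (q lst t))⁻¹ *
            (star (q i t) * deriv (q i) t - star (deriv (q i) t) * q i t) *
            (q lst t)⁻¹)
        - (‖q lst t‖ ^ 2)⁻¹ •
            (deriv (q lst) t * (q lst t)⁻¹ -
              (star (q lst t))⁻¹ * star (deriv (q lst) t)) := by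
  obtain ⟨m, rfl⟩ : ∃ m, n = m + 1 := ⟨n - 1, by have := lst.isLt; omega⟩
  obtain rfl : lst = Fin.last m := Fin.ext (by simpa using hlst)
  set Q := q (Fin.last m) t
  set Q' := deriv (q (Fin.last m)) t
  have hQ : Q ≠ 0 := hne t
  -- `Fin (m + 1 - 1)` is `Fin m` definitionally, and `⟨i.val, _⟩ : Fin (m + 1)` is `i.castSucc`.
  have summand (i : Fin m) : areaForm (w i t) (deriv (w i) t)
      = (star Q)⁻¹ * areaForm (q i.castSucc t) (deriv (q i.castSucc) t) * Q⁻¹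
        - (‖q i.castSucc t‖ ^ 2 * (‖Q‖ ^ 2)⁻¹) • (Q' * Q⁻¹ - (star Q)⁻¹ * star Q') := by
    have hwi : HasDerivAt (w i) (deriv (q i.castSucc) t * Q⁻¹
        + q i.castSucc t * -(Q⁻¹ * Q' * Q⁻¹)) t := by
      rw [funext (hw i)]
      exact (hq _ t).hasDerivAt.fun_mul ((hq _ t).hasDerivAt.inv' hQ)
    rw [hwi.deriv, hw i t]
    exact areaForm_mul_inv _ _ _ _
  have hnorm_init : ∑ i : Fin m, ‖q i.castSucc t‖ ^ 2 = 1 - ‖Q‖ ^ 2 := by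
    linarith [Fin.sum_univ_castSucc (fun i => ‖q i t‖ ^ 2) ▸ hnorm t]
  have hQnorm : ‖Q‖ ^ 2 ≠ 0 := by positivity
  change ∑ i : Fin m, areaForm (w i t) (deriv (w i) t)
    = ∑ i, (star Q)⁻¹ * areaForm (q i t) (deriv (q i) t) * Q⁻¹ - _
  rw [Finset.sum_congr rfl fun i _ => summand i, Fin.sum_univ_castSucc,
    inv_star_mul_areaForm_mul_inv hQ, Finset.sum_sub_distrib, ← Finset.sum_smul,
    ← Finset.sum_mul _ _ (‖Q‖ ^ 2)⁻¹, hnorm_init, sub_mul, one_mul, mul_inv_cancel₀ hQnorm,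
    sub_smul, one_smul]
  abel

/-- For differentiable quaternionic curves `q₁, …, qₙ` with `Σ_i |q_i|² = 1`
and `q_n ≠ 0`, setting `w_i = q_i q_n⁻¹`, one has
`Σ_{i<n} (conj w_i · w_i' - conj w_i' · w_i)
  = Σ_i conj(q_n)⁻¹ (conj q_i · q_i' - conj q_i' · q_i) q_n⁻¹
    - |q_n|⁻² (q_n' q_n⁻¹ - conj(q_n)⁻¹ conj(q_n'))`. -/
theorem area_form_affine_identity (n : ℕ) (hn : 2 ≤ n)
    (q : Fin n → ℝ → ℍ[ℝ]) (hq : ∀ i, Differentiable ℝ (q i))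
    (lst : Fin n) (hlst : lst.val = n - 1)
    (hnorm : ∀ t, ∑ i, ‖q i t‖ ^ 2 = 1) (hne : ∀ t, q lst t ≠ 0)
    (w : Fin (n - 1) → ℝ → ℍ[ℝ])
    (hw : ∀ (i : Fin (n - 1)) (t : ℝ),
      w i t = q ⟨i.val, lt_of_lt_of_le i.isLt (Nat.sub_le n 1)⟩ t * (q lst t)⁻¹)
    (t : ℝ) :
    ∑ i : Fin (n - 1),
        (star (w i t) * deriv (w i) t - star (deriv (w i) t) * w i t)
      = (∑ i : Fin n, (star (q lst t))⁻¹ *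
            (star (q i t) * deriv (q i) t - star (deriv (q i) t) * q i t) *
            (q lst t)⁻¹)
        - (‖q lst t‖ ^ 2)⁻¹ •
            (deriv (q lst) t * (q lst t)⁻¹ -
              (star (q lst t))⁻¹ * star (deriv (q lst) t)) :=
  area_form_affine_identity_general n q hq lst hlst hnorm hne w hw t
end

section
/- Let n ≥ 2 and let U = (q_{ij}) ∈ Sp(n). For 1 ≤ m ≤ n with q_{nm} ≠ 0 and β ∈ {1,2,3}, define φ_m^β(X) := ⟨q_{nm} e_β, (UX)_{nm}⟩ / |q_{nm}|² on sp(n), where ⟨p, r⟩ := Re(p r̄). Then for every 1 ≤ i ≤ n, every 1 ≤ m ≤ n with q_{nm} ≠ 0, and every β ∈ {1,2,3}: Σ_{1≤j<k≤n} Σ_{a=0}^{3} ⟨q_{ni}, (U X^{(a)}_{jk})_{ni}⟩ · φ_m^β(U X^{(a)}_{jk}) = 0. -/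
open Quaternion Matrix

/-- `e 0 = 1`, `e 1 = i`, `e 2 = j`, `e 3 = k` in the quaternions. -/
noncomputable def quatE : Fin 4 → ℍ[ℝ] :=
  ![⟨1, 0, 0, 0⟩, ⟨0, 1, 0, 0⟩, ⟨0, 0, 1, 0⟩, ⟨0, 0, 0, 1⟩]

/-- The off-diagonal generators `X^{(a)}_{jk} = E_{jk} e_a - E_{kj} ē_a`. -/
noncomputable def Xoff (n : ℕ) (j k : Fin n) (a : Fin 4) :
    Matrix (Fin n) (Fin n) ℍ[ℝ] :=
  Matrix.single j k (quatE a) - Matrix.single k j (star (quatE a))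

/-!
Write `q` for the last row of `U`. The row `q X^{(a)}_{jk}` has entries `q_j e_a` at `k` and
`-q_k ē_a` at `j` only, so `⟨x, (q X^{(a)}_{jk})_l⟩` is the `e_a`-coordinate of a quaternion
`c_l(x)` (`q̄_j x` at `l = k`, `-x̄ q_k` at `l = j`). Summing over the orthonormal basis `e_a`
turns each `(j, k)`-summand into `⟨c_i(q_i), c_m(q_m e_β)⟩`. With `p = q̄_j q_k`, the first
coefficient is a real multiple of `p` and the second a real combination of `p e_β` and `ē_β p`;
since `⟨p, p u⟩ = ⟨p, ū p⟩ = |p|² Re u` and `e_β` is purely imaginary, every summand vanishes.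
-/

namespace Quaternion

theorem re_mul_star_mul (x y e : ℍ[ℝ]) : (x * star (y * e)).re = (star y * x * star e).re := by
  simp only [re_mul, imI_mul, imJ_mul, imK_mul, star_mul, re_star, imI_star, imJ_star, imK_star]
  ring

theorem re_mul_star_mul_star (x y e : ℍ[ℝ]) :
    (x * star (y * star e)).re = (star x * y * star e).re := by
  simp only [re_mul, imI_mul, imJ_mul, imK_mul, star_mul, star_star, re_star, imI_star,
    imJ_star, imK_star]
  ring

theorem re_mul_star_mul_self (p u : ℍ[ℝ]) : (p * star (p * u)).re = normSq p * u.re := by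
  simp only [re_mul, imI_mul, imJ_mul, imK_mul, star_mul, re_star, imI_star, imJ_star, imK_star,
    normSq_def']
  ring

theorem re_mul_star_star_mul (p u : ℍ[ℝ]) : (p * star (star u * p)).re = normSq p * u.re := by
  simp only [re_mul, imI_mul, imJ_mul, imK_mul, star_mul, star_star, re_star, imI_star,
    imJ_star, imK_star, normSq_def']
  ring

end Quaternion

theorem re_quatE_succ (β : Fin 3) : (quatE β.succ).re = 0 := by
  fin_cases β <;> rfl

theorem sum_re_mul_star_quatE_mul_re_mul_star_quatE (c d : ℍ[ℝ]) :
    ∑ a, (c * star (quatE a)).re * (d * star (quatE a)).re = (c * star d).re := by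
  simp [Fin.sum_univ_four, quatE, re_mul]

variable {n : ℕ}

theorem vecMul_Xoff_apply (q : Fin n → ℍ[ℝ]) (j k : Fin n) (a : Fin 4) (p : Fin n) :
    (q ᵥ* Xoff n j k a) p =
      (if p = k then q j * quatE a else 0) - (if p = j then q k * star (quatE a) else 0) := by
  simp [Xoff, vecMul, dotProduct, Matrix.single_apply, mul_sub, Finset.sum_sub_distrib, ite_and,
    eq_comm]

theorem re_mul_star_vecMul_Xoff (q : Fin n → ℍ[ℝ]) (x : ℍ[ℝ]) (j k : Fin n) (a : Fin 4)
    (p : Fin n) :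
    (x * star ((q ᵥ* Xoff n j k a) p)).re =
      (((if p = k then star (q j) * x else 0) - (if p = j then star x * q k else 0)) *
        star (quatE a)).re := by
  rw [vecMul_Xoff_apply, star_sub, mul_sub, sub_mul, re_sub, re_sub]
  congr 1
  · split_ifs
    · exact re_mul_star_mul x (q j) (quatE a)
    · simp
  · split_ifs
    · exact re_mul_star_mul_star x (q k) (quatE a)
    · simp

theorem sum_re_mul_star_vecMul_Xoff_eq_zero (q : Fin n → ℍ[ℝ]) {j k : Fin n}
    (i m : Fin n) {u : ℍ[ℝ]} (hu : u.re = 0) :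
    ∑ a, (q i * star ((q ᵥ* Xoff n j k a) i)).re *
      (q m * u * star ((q ᵥ* Xoff n j k a) m)).re = 0 := by
  simp only [re_mul_star_vecMul_Xoff, sum_re_mul_star_quatE_mul_re_mul_star_quatE]
  set p := star (q j) * q k
  have hci : (if i = k then star (q j) * q i else 0) - (if i = j then star (q i) * q k else 0) =
      (if i = k then p else 0) - (if i = j then p else 0) := by
    split_ifs <;> subst_vars <;> rfl
  have hcm : (if m = k then star (q j) * (q m * u) else 0) -
      (if m = j then star (q m * u) * q k else 0) =
      (if m = k then p * u else 0) - (if m = j then star u * p else 0) := by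
    split_ifs <;> subst_vars <;> simp only [p, star_mul, mul_assoc]
  rw [hci, hcm, star_sub, mul_sub, sub_mul, sub_mul, re_sub, re_sub, re_sub]
  split_ifs <;> simp only [star_zero, mul_zero, zero_mul, re_zero, re_mul_star_mul_self,
    re_mul_star_star_mul, hu, sub_zero]

theorem radial_area_covariation_vanishes_general (n : ℕ)
    (U : Matrix (Fin n) (Fin n) ℍ[ℝ])
    (lst : Fin n)
    (i m : Fin n) (β : Fin 3) :
    (∑ j : Fin n, ∑ k : Fin n, if j < k then
        ∑ a : Fin 4,
          (U lst i * star ((U * Xoff n j k a) lst i)).re *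
            (((U lst m * quatE β.succ) * star ((U * Xoff n j k a) lst m)).re /
              ‖U lst m‖ ^ 2)
      else 0) = 0 := by
  refine Finset.sum_eq_zero fun j _ => Finset.sum_eq_zero fun k _ =>
    ite_eq_right_iff.mpr fun _ => ?_
  simp only [mul_apply_eq_vecMul, ← mul_div_assoc, ← Finset.sum_div]
  rw [sum_re_mul_star_vecMul_Xoff_eq_zero (U lst) i m (re_quatE_succ β), zero_div]

/-- Vanishing of the horizontal cometric pairing of `dλ_i` with the
Maurer–Cartan component one-form `ω_m^β`: for `U ∈ Sp(n)`, `q_{nm} ≠ 0`,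
`Σ_{j<k} Σ_a ⟨q_{ni}, (U X^{(a)}_{jk})_{ni}⟩ · φ_m^β(U X^{(a)}_{jk}) = 0`,
where `⟨p,r⟩ = Re(p r̄)` and `φ_m^β(X) = ⟨q_{nm}e_β, (UX)_{nm}⟩/|q_{nm}|²`. -/
theorem radial_area_covariation_vanishes (n : ℕ) (hn : 2 ≤ n)
    (U : Matrix (Fin n) (Fin n) ℍ[ℝ]) (hU : Uᴴ * U = 1)
    (lst : Fin n) (hlst : lst.val = n - 1)
    (i m : Fin n) (hm : U lst m ≠ 0) (β : Fin 3) :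
    (∑ j : Fin n, ∑ k : Fin n, if j < k then
        ∑ a : Fin 4,
          (U lst i * star ((U * Xoff n j k a) lst i)).re *
            (((U lst m * quatE β.succ) * star ((U * Xoff n j k a) lst m)).re /
              ‖U lst m‖ ^ 2)
      else 0) = 0 :=
  radial_area_covariation_vanishes_general n U lst i m β
end

section
/- Let n ≥ 1, let c_1, …, c_n ≥ 0, set μ_j := √(1 + c_j) − 1 ≥ 0, and define f : (0,∞)ⁿ → ℝ by f(λ_1, …, λ_n) := Π_{j=1}^n λ_j^{μ_j/2}. Let Ĝ denote the lifted Jacobi operator of index (3/2, …, 3/2). Then f is an eigenfunction of the Schrödinger-type operator Ĝ − ¼ Σ_{j=1}^n c_j (1 − λ_j)/λ_j: for every λ ∈ (0,∞)ⁿ, (Ĝ f)(λ) − ¼ Σ_{j=1}^n c_j ((1 − λ_j)/λ_j) f(λ) = −[ (n−1) Σ_{j=1}^n μ_j + ¼ Σ_{1≤j≠ℓ≤n} μ_j μ_ℓ ] f(λ). -/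
/-- The lifted Jacobi operator `Ĝ` of index `(3/2, …, 3/2)`. -/
noncomputable def Ghat (n : ℕ) (F : (Fin n → ℝ) → ℝ) (x : Fin n → ℝ) : ℝ :=
  (∑ j, x j * (1 - x j) * pd j (pd j F) x)
  + (∑ j, (2 - 2 * n * x j) * pd j F x)
  - ∑ j, ∑ ℓ, if j = ℓ then 0 else x j * x ℓ * pd j (pd ℓ F) x

open Filter Topology Finset

section RpowMonomial

variable {ι : Type*} [Fintype ι] (e : ι → ℝ) {x : ι → ℝ}

noncomputable def rpowMonomial (x : ι → ℝ) : ℝ := ∏ j, x j ^ e j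

lemma eventually_forall_pos_nhds (hx : ∀ j, 0 < x j) : ∀ᶠ y in 𝓝 x, ∀ j, 0 < y j :=
  eventually_all.2 fun j =>
    continuousAt_const.eventually_lt (continuous_apply j).continuousAt (hx j)

lemma rpowMonomial_eq_exp_sum_mul_log (hx : ∀ j, 0 < x j) :
    rpowMonomial e x = Real.exp (∑ j, e j * Real.log (x j)) := by
  rw [Real.exp_sum]
  exact prod_congr rfl fun j _ => by rw [Real.rpow_def_of_pos (hx j), mul_comm]

lemma hasFDerivAt_rpowMonomial (hx : ∀ j, 0 < x j) :
    HasFDerivAt (rpowMonomial e)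
      (rpowMonomial e x • ∑ j, e j • (x j)⁻¹ • ContinuousLinearMap.proj (R := ℝ) j) x := by
  have hlog : HasFDerivAt (fun y : ι → ℝ => ∑ j, e j * Real.log (y j))
      (∑ j, e j • (x j)⁻¹ • ContinuousLinearMap.proj (R := ℝ) j) x :=
    HasFDerivAt.fun_sum fun j _ => ((hasFDerivAt_apply j x).log (hx j).ne').const_mul (e j)
  rw [rpowMonomial_eq_exp_sum_mul_log e hx]
  refine hlog.exp.congr_of_eventuallyEq ?_
  filter_upwards [eventually_forall_pos_nhds hx] with y hy
  exact rpowMonomial_eq_exp_sum_mul_log e hy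

lemma rpowMonomial_update_sub_one [DecidableEq ι] (ℓ : ι) (hx : 0 < x ℓ) :
    rpowMonomial (Function.update e ℓ (e ℓ - 1)) x = rpowMonomial e x / x ℓ := by
  rw [rpowMonomial, rpowMonomial, Fintype.prod_eq_mul_prod_compl ℓ,
    Fintype.prod_eq_mul_prod_compl ℓ (fun j => x j ^ e j), Function.update_self,
    prod_congr rfl fun j hj => by rw [Function.update_of_ne (by simpa using hj)],
    Real.rpow_sub_one hx.ne']
  ring

end RpowMonomial

section PartialDerivatives

variable {n : ℕ} (e : Fin n → ℝ) {x : Fin n → ℝ}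

lemma pd_rpowMonomial (i : Fin n) (hx : ∀ j, 0 < x j) :
    pd i (rpowMonomial e) x = e i / x i * rpowMonomial e x := by
  simp [pd, (hasFDerivAt_rpowMonomial e hx).fderiv, Pi.single_apply, div_eq_mul_inv, mul_comm]

lemma pd_rpowMonomial_eventuallyEq (ℓ : Fin n) (hx : ∀ j, 0 < x j) :
    pd ℓ (rpowMonomial e) =ᶠ[𝓝 x]
      fun y => e ℓ * rpowMonomial (Function.update e ℓ (e ℓ - 1)) y := by
  filter_upwards [eventually_forall_pos_nhds hx] with y hy
  rw [pd_rpowMonomial e ℓ hy, rpowMonomial_update_sub_one e ℓ (hy ℓ)]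
  ring

lemma pd_pd_rpowMonomial (i ℓ : Fin n) (hx : ∀ j, 0 < x j) :
    pd i (pd ℓ (rpowMonomial e)) x
      = e ℓ * Function.update e ℓ (e ℓ - 1) i / (x i * x ℓ) * rpowMonomial e x := by
  have hd := (hasFDerivAt_rpowMonomial (Function.update e ℓ (e ℓ - 1)) hx).differentiableAt
  rw [pd, (pd_rpowMonomial_eventuallyEq e ℓ hx).fderiv_eq, fderiv_const_mul hd,
    smul_apply, smul_eq_mul, ← pd, pd_rpowMonomial _ i hx,
    rpowMonomial_update_sub_one e ℓ (hx ℓ)]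
  ring

end PartialDerivatives

lemma Ghat_rpowMonomial {n : ℕ} (e : Fin n → ℝ) {x : Fin n → ℝ} (hx : ∀ j, 0 < x j) :
    Ghat n (rpowMonomial e) x
      = (∑ j, e j * (e j + 1) / x j - ∑ j, (e j * (e j - 1) + 2 * n * e j)
          - ∑ j, ∑ ℓ, if j = ℓ then 0 else e j * e ℓ) * rpowMonomial e x := by
  have diag : ∀ j, x j * (1 - x j) * pd j (pd j (rpowMonomial e)) x
      + (2 - 2 * n * x j) * pd j (rpowMonomial e) x
      = (e j * (e j + 1) / x j - (e j * (e j - 1) + 2 * n * e j)) * rpowMonomial e x := by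
    intro j
    rw [pd_pd_rpowMonomial e j j hx, pd_rpowMonomial e j hx, Function.update_self]
    field_simp [(hx j).ne']
    ring
  have offDiag : ∀ j ℓ, (if j = ℓ then 0 else x j * x ℓ * pd j (pd ℓ (rpowMonomial e)) x)
      = (if j = ℓ then 0 else e j * e ℓ) * rpowMonomial e x := by
    intro j ℓ
    split_ifs with h
    · simp
    · rw [pd_pd_rpowMonomial e j ℓ hx, Function.update_of_ne h]
      field_simp [(hx j).ne', (hx ℓ).ne']
  rw [Ghat, ← sum_add_distrib, sum_congr rfl fun j _ => diag j]
  simp only [offDiag, ← sum_mul, sum_sub_distrib]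
  ring

lemma eq_mul_add_two_of_eq_sqrt_one_add_sub_one {c μ : ℝ} (hc : 0 ≤ c)
    (hμ : μ = Real.sqrt (1 + c) - 1) : c = μ * (μ + 2) := by
  have h := Real.sq_sqrt (by linarith : (0 : ℝ) ≤ 1 + c)
  rw [show Real.sqrt (1 + c) = μ + 1 by rw [hμ]; ring] at h
  linear_combination -h

theorem Ghat_schroedinger_eigenfunction_general (n : ℕ)
    (c : Fin n → ℝ) (hc : ∀ j, 0 ≤ c j)
    (μ : Fin n → ℝ) (hμ : ∀ j, μ j = Real.sqrt (1 + c j) - 1)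
    (lam : Fin n → ℝ) (hlam : ∀ j, 0 < lam j) :
    Ghat n (fun x => ∏ j, x j ^ (μ j / 2)) lam
      - (1/4) * (∑ j, c j * ((1 - lam j) / lam j)) * ∏ j, lam j ^ (μ j / 2)
    = -(((n : ℝ) - 1) * (∑ j, μ j) +
          (1/4) * ∑ j, ∑ ℓ, if j = ℓ then 0 else μ j * μ ℓ)
        * ∏ j, lam j ^ (μ j / 2) := by
  have hpotential : ∀ j, μ j / 2 * (μ j / 2 + 1) / lam j
      - (μ j / 2 * (μ j / 2 - 1) + 2 * n * (μ j / 2))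
      - 1/4 * (c j * ((1 - lam j) / lam j)) = (1 - n) * μ j := by
    intro j
    rw [eq_mul_add_two_of_eq_sqrt_one_add_sub_one (hc j) (hμ j)]
    field_simp [(hlam j).ne']
    ring
  have hdiag : ∑ j, μ j / 2 * (μ j / 2 + 1) / lam j
      - ∑ j, (μ j / 2 * (μ j / 2 - 1) + 2 * n * (μ j / 2))
      - 1/4 * ∑ j, c j * ((1 - lam j) / lam j) = (1 - n) * ∑ j, μ j := by
    rw [mul_sum, mul_sum, ← sum_sub_distrib, ← sum_sub_distrib]
    exact sum_congr rfl fun j _ => hpotential j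
  have hcross : (∑ j, ∑ ℓ, if j = ℓ then 0 else μ j / 2 * (μ ℓ / 2))
      = 1/4 * ∑ j, ∑ ℓ, if j = ℓ then 0 else μ j * μ ℓ := by
    simp only [mul_sum, mul_ite, mul_zero]
    exact sum_congr rfl fun j _ => sum_congr rfl fun ℓ _ => by split_ifs <;> ring
  rw [show (fun x : Fin n → ℝ => ∏ j, x j ^ (μ j / 2))
      = rpowMonomial (fun j => μ j / 2) from rfl, Ghat_rpowMonomial _ hlam, rpowMonomial]
  linear_combination (∏ j, lam j ^ (μ j / 2)) * (hdiag - hcross)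

/-- With `c_j ≥ 0`, `μ_j = √(1+c_j) - 1` and `f(λ) = Π_j λ_j^{μ_j/2}`, the
function `f` is an eigenfunction of `Ĝ - ¼ Σ_j c_j (1-λ_j)/λ_j` with
eigenvalue `-[(n-1) Σ_j μ_j + ¼ Σ_{j≠ℓ} μ_jμ_ℓ]`. -/
theorem Ghat_schroedinger_eigenfunction (n : ℕ) (hn : 1 ≤ n)
    (c : Fin n → ℝ) (hc : ∀ j, 0 ≤ c j)
    (μ : Fin n → ℝ) (hμ : ∀ j, μ j = Real.sqrt (1 + c j) - 1)
    (lam : Fin n → ℝ) (hlam : ∀ j, 0 < lam j) :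
    Ghat n (fun x => ∏ j, x j ^ (μ j / 2)) lam
      - (1/4) * (∑ j, c j * ((1 - lam j) / lam j)) * ∏ j, lam j ^ (μ j / 2)
    = -(((n : ℝ) - 1) * (∑ j, μ j) +
          (1/4) * ∑ j, ∑ ℓ, if j = ℓ then 0 else μ j * μ ℓ)
        * ∏ j, lam j ^ (μ j / 2) :=
  Ghat_schroedinger_eigenfunction_general n c hc μ hμ lam hlam
end
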